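/- Let Θ₀ : ℝ → [0,1] be a fixed smooth even function with Θ₀(x) = 1 for |x| ≤ 1 and Θ₀(x) = 0 for |x| ≥ 2. For δ ∈ (0,1), λ > 0 and s ≥ 1, set θ(y) = Θ₀(λy/δ). Then for all integers j, k ≥ 0 and every R ∈ 𝒵_k there exists a constant C (depending only on R, j, k and Θ₀, not on δ, λ, s) such that whenever 1/(2s) ≤ λ ≤ min(δ, 2/s): (a) ‖(d^j θ/dy^j) · R‖_{L²(ℝ)} ≤ C δ^{1/2+k−j} s^{1/2+k−j}; (b) if j+k ≥ 1 then ‖ d/dy( (d^j θ/dy^j) · R )‖_{L²(ℝ)} ≤ C δ^{−1/2+k−j} s^{−1/2+k−j}; (c) if k = 0 then ‖d/dy(θ R)‖_{L²(ℝ)} ≤ C. In particular ‖(d^jθ/dy^j) · R‖_{H¹(ℝ)} ≤ C δ^{1/2+k−j} s^{1/2+k−j}. -/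

import Mathlib

open scoped ContDiff

/-- The class `𝒴` of smooth even real functions decaying, together with all their derivatives,
like a polynomial times `e^{-|x|}`. -/
def memY (g : ℝ → ℝ) : Prop :=
  ContDiff ℝ ∞ g ∧ (∀ x, g (-x) = g x) ∧
    ∃ q : ℕ, ∀ p : ℕ, ∃ C : ℝ, 0 < C ∧ ∀ x : ℝ,
      |iteratedDeriv p g x| ≤ C * (1 + x ^ 2) ^ ((q : ℝ) / 2) * Real.exp (-|x|)

/-- `χ` is a smooth even cut-off with `0 ≤ χ ≤ 1`, `χ = 0` on `|x| ≤ 1/2` and `χ = 1` on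
`|x| ≥ 1`. -/
def IsCutChi (χ : ℝ → ℝ) : Prop :=
  ContDiff ℝ ∞ χ ∧ (∀ x, χ (-x) = χ x) ∧ (∀ x, 0 ≤ χ x ∧ χ x ≤ 1) ∧
    (∀ x : ℝ, |x| ≤ 1 / 2 → χ x = 0) ∧ (∀ x : ℝ, 1 ≤ |x| → χ x = 1)

/-- The class `𝒵ₖ = 𝒴 + span{μ₀, …, μₖ}` where `μᵢ(x) = |x|^i χ(x)`. -/
def memZ (χ : ℝ → ℝ) (k : ℕ) (g : ℝ → ℝ) : Prop :=
  ∃ v : ℝ → ℝ, memY v ∧ ∃ c : ℕ → ℝ, ∀ x : ℝ,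
    g x = v x + ∑ i ∈ Finset.range (k + 1), c i * (|x| ^ i * χ x)

/-- The rescaled cut-off `θ(y) = Θ₀(λy/δ)`. -/
noncomputable def cutTheta (Θ₀ : ℝ → ℝ) (δ lam : ℝ) (y : ℝ) : ℝ := Θ₀ (lam * y / δ)

/-!
Write `θ(y) = Θ₀(y / t)` with `t = δ / λ ≥ 1`. The constraints on `λ` give `δ s / 2 ≤ t ≤ 2 δ s`,
so it suffices to bound everything by powers of `t`. Every `R ∈ 𝒵ₖ` satisfies
`|R| ≲ (1 + |y|)^k` and `|R'| ≲ (1 + |y|)^(k-1)`, while `θ⁽ⁿ⁾ = t⁻ⁿ Θ₀⁽ⁿ⁾(· / t)` is supported in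
`|y| ≤ 2t`, and for `n ≥ 1` in the layer `t ≤ |y| ≤ 2t`. Hence `θ⁽ⁿ⁾ (1 + |y|)^m = O(t^(m-n))` on
a set of measure `4t`, whose `L²` norm is `O(t^(m-n+1/2))`: this is (a), and (b) through
`(θ⁽ʲ⁾R)' = θ⁽ʲ⁺¹⁾R + θ⁽ʲ⁾R'`. In (c) the term `θR'` is not localised, but `R' ∈ L²` when `k = 0`.
-/

open scoped Topology
open MeasureTheory Set Filter

theorem integral_sq_le_of_abs_le {α : Type*} [MeasurableSpace α] {μ : Measure α} {h g : α → ℝ}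
    (hg : Integrable (fun x => g x ^ 2) μ) (hhg : ∀ x, |h x| ≤ g x) :
    ∫ x, h x ^ 2 ∂μ ≤ ∫ x, g x ^ 2 ∂μ :=
  integral_mono_of_nonneg (.of_forall fun _ => sq_nonneg _) hg
    (.of_forall fun x => by
      simp only [← sq_abs (h x)]; exact pow_le_pow_left₀ (abs_nonneg _) (hhg x) 2)

theorem integrable_sq_of_abs_le {α : Type*} [MeasurableSpace α] {μ : Measure α} {h g : α → ℝ}
    (hh : AEStronglyMeasurable h μ) (hg : Integrable (fun x => g x ^ 2) μ)
    (hhg : ∀ x, |h x| ≤ g x) : Integrable (fun x => h x ^ 2) μ :=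
  hg.mono' (hh.pow 2) (.of_forall fun x => by
    rw [Real.norm_of_nonneg (sq_nonneg _), ← sq_abs]
    exact pow_le_pow_left₀ (abs_nonneg _) (hhg x) 2)

theorem integral_sq_add_le {α : Type*} [MeasurableSpace α] {μ : Measure α} {a b : α → ℝ}
    (ha : Integrable (fun x => a x ^ 2) μ) (hb : Integrable (fun x => b x ^ 2) μ) :
    ∫ x, (a x + b x) ^ 2 ∂μ ≤ 2 * ∫ x, a x ^ 2 ∂μ + 2 * ∫ x, b x ^ 2 ∂μ := by
  rw [← integral_const_mul, ← integral_const_mul, ← integral_add (ha.const_mul 2) (hb.const_mul 2)]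
  exact integral_mono_of_nonneg (.of_forall fun x => sq_nonneg _)
    ((ha.const_mul 2).add (hb.const_mul 2))
    (.of_forall fun x => by nlinarith [sq_nonneg (a x - b x)])

theorem integral_sq_le_of_abs_le_of_support {h : ℝ → ℝ} {D A : ℝ} (hA : 0 ≤ A)
    (hb : ∀ y, |h y| ≤ D) (hs : ∀ y, A < |y| → h y = 0) :
    ∫ y, h y ^ 2 ≤ D ^ 2 * (2 * A) := by
  have hle : ∀ y, h y ^ 2 ≤ (Icc (-A) A).indicator (fun _ => D ^ 2) y := by
    intro y
    by_cases hy : y ∈ Icc (-A) A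
    · rw [indicator_of_mem hy, ← sq_abs]
      exact pow_le_pow_left₀ (abs_nonneg _) (hb y) 2
    · rw [indicator_of_notMem hy, hs y (by rw [mem_Icc, ← abs_le] at hy; linarith)]
      norm_num
  calc ∫ y, h y ^ 2 ≤ ∫ y, (Icc (-A) A).indicator (fun _ => D ^ 2) y :=
        integral_mono_of_nonneg (.of_forall fun y => sq_nonneg _)
          ((integrable_indicator_iff measurableSet_Icc).2 (integrableOn_const (by simp)))
          (.of_forall hle)
    _ = D ^ 2 * (2 * A) := by
        rw [integral_indicator_const _ measurableSet_Icc, Real.volume_real_Icc_of_le (by linarith),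
          smul_eq_mul]
        ring

theorem integrable_sq_of_continuous_of_support {h : ℝ → ℝ} {A : ℝ} (hh : Continuous h)
    (hs : ∀ y, A < |y| → h y = 0) : Integrable fun y => h y ^ 2 :=
  (hh.pow 2).integrable_of_hasCompactSupport (.intro (isCompact_Icc (a := -A) (b := A))
    fun y hy => by
      simp [hs y (by rw [mem_Icc, ← abs_le] at hy; linarith)])

theorem sqrt_integral_sq_le_of_support {h : ℝ → ℝ} {K t : ℝ} {z : ℤ} (hK : 0 ≤ K) (ht : 0 < t)
    (hb : ∀ y, |h y| ≤ K * t ^ z) (hs : ∀ y, 2 * t < |y| → h y = 0) :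
    Real.sqrt (∫ y, h y ^ 2) ≤ 2 * K * t ^ ((z : ℝ) + 1 / 2) := by
  have hsq : (t ^ ((z : ℝ) + 1 / 2)) ^ 2 = (t ^ z) ^ 2 * t := by
    rw [← Real.rpow_intCast, ← Real.rpow_natCast, ← Real.rpow_mul ht.le,
      ← Real.rpow_natCast (t ^ (z : ℝ)) 2, ← Real.rpow_mul ht.le, ← Real.rpow_add_one ht.ne']
    norm_num; ring_nf
  rw [Real.sqrt_le_left (by positivity)]
  refine (integral_sq_le_of_abs_le_of_support (by positivity) hb hs).trans (le_of_eq ?_)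
  rw [mul_pow, mul_pow, hsq]
  ring

theorem integrable_one_add_abs_zpow_neg_two :
    Integrable (fun y : ℝ => ((1 + |y|) ^ (-1 : ℤ)) ^ 2) := by
  refine (integrable_one_add_norm (E := ℝ) (μ := volume) (r := 2) (by norm_num)).congr
    (.of_forall fun y => ?_)
  simp only [Real.norm_eq_abs, ← zpow_natCast, ← zpow_mul]
  rw [← Real.rpow_intCast]
  norm_num

theorem sqrt_add_le_add_sqrt {a b : ℝ} (ha : 0 ≤ a) (hb : 0 ≤ b) :
    Real.sqrt (a + b) ≤ Real.sqrt a + Real.sqrt b := by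
  rw [Real.sqrt_le_left (by positivity)]
  nlinarith [Real.sq_sqrt ha, Real.sq_sqrt hb, Real.sqrt_nonneg a, Real.sqrt_nonneg b]

theorem iteratedDeriv_eq_of_eqOn_const {f : ℝ → ℝ} {U : Set ℝ} {c x : ℝ} (hU : IsOpen U)
    (hf : EqOn f (fun _ => c) U) (n : ℕ) (hx : x ∈ U) :
    iteratedDeriv n f x = if n = 0 then c else 0 := by
  rw [hf.iteratedDeriv_of_isOpen hU n hx, iteratedDeriv_const]

theorem iteratedDeriv_comp_inv_mul {f : ℝ → ℝ} (hf : ContDiff ℝ ∞ f) (t : ℝ) (n : ℕ) (y : ℝ) :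
    iteratedDeriv n (fun y => f (t⁻¹ * y)) y = t⁻¹ ^ n * iteratedDeriv n f (t⁻¹ * y) := by
  rw [iteratedDeriv_comp_const_mul (hf.of_le (by exact_mod_cast le_top))]

theorem deriv_iteratedDeriv_mul {g f : ℝ → ℝ} (hg : ContDiff ℝ ∞ g) (hf : Differentiable ℝ f)
    (n : ℕ) (y : ℝ) :
    deriv (fun z => iteratedDeriv n g z * f z) y =
      iteratedDeriv (n + 1) g y * f y + iteratedDeriv n g y * deriv f y := by
  rw [iteratedDeriv_succ, deriv_fun_mul
    (hg.differentiable_iteratedDeriv n (by exact_mod_cast WithTop.coe_lt_top _) y) (hf y)]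

theorem one_add_abs_zpow_le {t y : ℝ} {m : ℤ} (ht : 1 ≤ t) (hy : |y| ≤ 2 * t)
    (hm : m < 0 → t ≤ |y|) : (1 + |y|) ^ m ≤ 3 ^ m.toNat * t ^ m := by
  rcases le_or_gt 0 m with hm0 | hm0
  · lift m to ℕ using hm0
    simp only [Int.toNat_natCast, zpow_natCast, ← mul_pow]
    exact pow_le_pow_left₀ (by positivity) (by linarith) m
  · obtain ⟨n, rfl⟩ := Int.exists_eq_neg_ofNat hm0.le
    rw [Int.toNat_eq_zero.2 hm0.le, pow_zero, one_mul, zpow_neg, zpow_neg, zpow_natCast,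
      zpow_natCast]
    exact inv_anti₀ (by positivity) (pow_le_pow_left₀ (by linarith) (by linarith [hm hm0]) n)

structure IsCutoff (Θ₀ : ℝ → ℝ) : Prop where
  contDiff : ContDiff ℝ ∞ Θ₀
  eq_one : ∀ x : ℝ, |x| ≤ 1 → Θ₀ x = 1
  eq_zero : ∀ x : ℝ, 2 ≤ |x| → Θ₀ x = 0

namespace IsCutoff

variable {Θ₀ : ℝ → ℝ} {t : ℝ}

theorem iteratedDeriv_eq_zero_of_two_lt_abs (hΘ : IsCutoff Θ₀) (n : ℕ) {x : ℝ} (hx : 2 < |x|) :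
    iteratedDeriv n Θ₀ x = 0 := by
  rw [iteratedDeriv_eq_of_eqOn_const (c := 0) (isOpen_lt continuous_const continuous_abs)
    (fun y hy => hΘ.eq_zero y (le_of_lt hy)) n hx]
  simp

theorem iteratedDeriv_eq_zero_of_abs_lt_one (hΘ : IsCutoff Θ₀) {n : ℕ} (hn : n ≠ 0) {x : ℝ}
    (hx : |x| < 1) : iteratedDeriv n Θ₀ x = 0 := by
  rw [iteratedDeriv_eq_of_eqOn_const (c := 1) (isOpen_lt continuous_abs continuous_const)
    (fun y hy => hΘ.eq_one y (le_of_lt hy)) n hx]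
  simp [hn]

theorem exists_abs_iteratedDeriv_le (hΘ : IsCutoff Θ₀) (n : ℕ) :
    ∃ M, 0 ≤ M ∧ ∀ x, |iteratedDeriv n Θ₀ x| ≤ M := by
  obtain ⟨M, hM⟩ := (hΘ.contDiff.continuous_iteratedDeriv n (by exact_mod_cast le_top))
    |>.bounded_above_of_compact_support (.intro (isCompact_Icc (a := -2) (b := 2)) fun x hx =>
      hΘ.iteratedDeriv_eq_zero_of_two_lt_abs n (by rw [mem_Icc, ← abs_le] at hx; linarith))
  exact ⟨M, (norm_nonneg _).trans (hM 0), hM⟩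

theorem iteratedDeriv_rescale_eq_zero_of_two_mul_lt (hΘ : IsCutoff Θ₀) (ht : 0 < t) (n : ℕ)
    {y : ℝ} (hy : 2 * t < |y|) : iteratedDeriv n (fun y => Θ₀ (t⁻¹ * y)) y = 0 := by
  have hx : 2 < |t⁻¹ * y| := by
    rw [abs_mul, abs_inv, abs_of_pos ht, inv_mul_eq_div, lt_div_iff₀ ht]; linarith
  rw [iteratedDeriv_comp_inv_mul hΘ.contDiff, hΘ.iteratedDeriv_eq_zero_of_two_lt_abs n hx, mul_zero]

theorem iteratedDeriv_rescale_eq_zero_of_abs_lt (hΘ : IsCutoff Θ₀) (ht : 0 < t) {n : ℕ}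
    (hn : n ≠ 0) {y : ℝ} (hy : |y| < t) : iteratedDeriv n (fun y => Θ₀ (t⁻¹ * y)) y = 0 := by
  have hx : |t⁻¹ * y| < 1 := by
    rw [abs_mul, abs_inv, abs_of_pos ht, inv_mul_eq_div, div_lt_one ht]; exact hy
  rw [iteratedDeriv_comp_inv_mul hΘ.contDiff, hΘ.iteratedDeriv_eq_zero_of_abs_lt_one hn hx,
    mul_zero]

/-- For `n ≥ 1` the `n`-th derivative of the rescaled cut-off lives on the layer `t ≤ |y| ≤ 2t`,
which is what lets it absorb a decaying weight `(1 + |y|) ^ m`, `m < 0`. -/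
theorem abs_iteratedDeriv_rescale_mul_le (hΘ : IsCutoff Θ₀) {n : ℕ} {M : ℝ}
    (hM : ∀ x, |iteratedDeriv n Θ₀ x| ≤ M) {f : ℝ → ℝ} {B : ℝ} {m : ℤ}
    (hf : ∀ y, |f y| ≤ B * (1 + |y|) ^ m) (hnm : m < 0 → n ≠ 0) (ht : 1 ≤ t) (y : ℝ) :
    |iteratedDeriv n (fun y => Θ₀ (t⁻¹ * y)) y * f y| ≤ 3 ^ m.toNat * M * B * t ^ (m - n) := by
  have ht0 : 0 < t := by linarith
  have hM0 : 0 ≤ M := (abs_nonneg _).trans (hM 0)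
  have hB0 : 0 ≤ B := by simpa using (abs_nonneg _).trans (hf 0)
  have hrhs : 0 ≤ 3 ^ m.toNat * M * B * t ^ (m - n) := by positivity
  rcases lt_or_ge (2 * t) |y| with hy2 | hy2
  · rwa [hΘ.iteratedDeriv_rescale_eq_zero_of_two_mul_lt ht0 n hy2, zero_mul, abs_zero]
  by_cases hy1 : n ≠ 0 ∧ |y| < t
  · rwa [hΘ.iteratedDeriv_rescale_eq_zero_of_abs_lt ht0 hy1.1 hy1.2, zero_mul, abs_zero]
  have hlayer : m < 0 → t ≤ |y| := fun hm => by
    by_contra h; exact hy1 ⟨hnm hm, not_le.1 h⟩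
  have hpow : t⁻¹ ^ n * t ^ m = t ^ (m - n) := by
    rw [zpow_sub₀ ht0.ne', inv_pow, zpow_natCast, div_eq_mul_inv, mul_comm]
  calc |iteratedDeriv n (fun y => Θ₀ (t⁻¹ * y)) y * f y|
      = t⁻¹ ^ n * |iteratedDeriv n Θ₀ (t⁻¹ * y)| * |f y| := by
        rw [iteratedDeriv_comp_inv_mul hΘ.contDiff, abs_mul, abs_mul, abs_pow, abs_inv,
          abs_of_pos ht0]
    _ ≤ t⁻¹ ^ n * M * (B * (3 ^ m.toNat * t ^ m)) := by
        gcongr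
        · exact hM _
        · exact (hf y).trans (by gcongr; exact one_add_abs_zpow_le ht hy2 hlayer)
    _ = 3 ^ m.toNat * M * B * t ^ (m - n) := by rw [← hpow]; ring

theorem sqrt_integral_sq_iteratedDeriv_rescale_mul_le (hΘ : IsCutoff Θ₀) {n : ℕ} {M : ℝ}
    (hM : ∀ x, |iteratedDeriv n Θ₀ x| ≤ M) {f : ℝ → ℝ} {B : ℝ} {m : ℤ}
    (hf : ∀ y, |f y| ≤ B * (1 + |y|) ^ m) (hnm : m < 0 → n ≠ 0) (ht : 1 ≤ t) :
    Real.sqrt (∫ y, (iteratedDeriv n (fun y => Θ₀ (t⁻¹ * y)) y * f y) ^ 2) ≤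
      2 * (3 ^ m.toNat * M * B) * t ^ (((m - n : ℤ) : ℝ) + 1 / 2) := by
  have hM0 : 0 ≤ M := (abs_nonneg _).trans (hM 0)
  have hB0 : 0 ≤ B := by simpa using (abs_nonneg _).trans (hf 0)
  exact sqrt_integral_sq_le_of_support (by positivity) (by linarith)
    (hΘ.abs_iteratedDeriv_rescale_mul_le hM hf hnm ht) fun y hy => by
      rw [hΘ.iteratedDeriv_rescale_eq_zero_of_two_mul_lt (by linarith) n hy, zero_mul]

theorem sqrt_integral_sq_deriv_iteratedDeriv_rescale_mul_le (hΘ : IsCutoff Θ₀) {n : ℕ}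
    {M₀ M₁ : ℝ} (hM₀ : ∀ x, |iteratedDeriv n Θ₀ x| ≤ M₀)
    (hM₁ : ∀ x, |iteratedDeriv (n + 1) Θ₀ x| ≤ M₁) {f : ℝ → ℝ} (hfd : Differentiable ℝ f)
    {B₀ B₁ : ℝ} {m : ℤ} (hf : ∀ y, |f y| ≤ B₀ * (1 + |y|) ^ m)
    (hf' : ∀ y, |deriv f y| ≤ B₁ * (1 + |y|) ^ (m - 1)) (hnm : m < 1 → n ≠ 0) (ht : 1 ≤ t) :
    Real.sqrt (∫ y, (deriv (fun z => iteratedDeriv n (fun y => Θ₀ (t⁻¹ * y)) z * f z) y) ^ 2) ≤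
      2 * (3 ^ m.toNat * M₁ * B₀ + 3 ^ (m - 1).toNat * M₀ * B₁) *
        t ^ (((m - n - 1 : ℤ) : ℝ) + 1 / 2) := by
  have hM0 : 0 ≤ M₀ := (abs_nonneg _).trans (hM₀ 0)
  have hM1 : 0 ≤ M₁ := (abs_nonneg _).trans (hM₁ 0)
  have hB0 : 0 ≤ B₀ := by simpa using (abs_nonneg _).trans (hf 0)
  have hB1 : 0 ≤ B₁ := by simpa using (abs_nonneg _).trans (hf' 0)
  have ht0 : 0 < t := by linarith
  have hθ : ContDiff ℝ ∞ fun y => Θ₀ (t⁻¹ * y) := hΘ.contDiff.comp (contDiff_const.mul contDiff_id)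
  have hderiv := deriv_iteratedDeriv_mul hθ hfd n
  refine sqrt_integral_sq_le_of_support (by positivity) ht0 (fun y => ?_) fun y hy => ?_
  · have h₁ := hΘ.abs_iteratedDeriv_rescale_mul_le hM₁ hf (fun _ => n.succ_ne_zero) ht y
    have h₀ := hΘ.abs_iteratedDeriv_rescale_mul_le hM₀ hf' (fun h => hnm (by omega)) ht y
    rw [hderiv, add_mul]
    refine (abs_add_le _ _).trans (add_le_add (h₁.trans_eq ?_) (h₀.trans_eq ?_))
    · rw [Nat.cast_succ, ← sub_sub]
    · rw [sub_right_comm]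
  · rw [hderiv, hΘ.iteratedDeriv_rescale_eq_zero_of_two_mul_lt ht0 _ hy,
      hΘ.iteratedDeriv_rescale_eq_zero_of_two_mul_lt ht0 _ hy, zero_mul, zero_mul, add_zero]

/-- The transition term is `O(1 / t)` on a set of measure `4t`. -/
theorem integral_sq_deriv_rescale_mul_le (hΘ : IsCutoff Θ₀) {M₁ : ℝ}
    (hM₁ : ∀ x, |deriv Θ₀ x| ≤ M₁) {f : ℝ → ℝ} {B₀ : ℝ} (hf : ∀ y, |f y| ≤ B₀) (ht : 1 ≤ t) :
    ∫ y, (deriv (fun y => Θ₀ (t⁻¹ * y)) y * f y) ^ 2 ≤ 4 * (M₁ * B₀) ^ 2 := by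
  have ht0 : 0 < t := by linarith
  have ha : ∀ y, |deriv (fun y => Θ₀ (t⁻¹ * y)) y * f y| ≤ M₁ * B₀ * t ^ (-1 : ℤ) := fun y => by
    simpa [iteratedDeriv_one] using hΘ.abs_iteratedDeriv_rescale_mul_le (n := 1) (m := 0)
      (by simpa using hM₁) (by simpa using hf) (by omega) ht y
  refine (integral_sq_le_of_abs_le_of_support (A := 2 * t) (by positivity) ha
    fun y hy => ?_).trans ?_
  · rw [← iteratedDeriv_one, hΘ.iteratedDeriv_rescale_eq_zero_of_two_mul_lt ht0 1 hy, zero_mul]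
  have : (t ^ (-1 : ℤ)) ^ 2 * t ≤ 1 := by
    rw [zpow_neg_one, inv_pow, sq, mul_inv, mul_assoc, inv_mul_cancel₀ ht0.ne', mul_one]
    exact inv_le_one_of_one_le₀ ht
  nlinarith [sq_nonneg (M₁ * B₀)]

theorem sqrt_integral_sq_deriv_rescale_mul_le (hΘ : IsCutoff Θ₀) {M₀ M₁ : ℝ}
    (hM₀ : ∀ x, |Θ₀ x| ≤ M₀) (hM₁ : ∀ x, |deriv Θ₀ x| ≤ M₁) {f : ℝ → ℝ}
    (hfd : Differentiable ℝ f) {B₀ B₁ : ℝ} (hf : ∀ y, |f y| ≤ B₀)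
    (hf' : ∀ y, |deriv f y| ≤ B₁ * (1 + |y|) ^ (-1 : ℤ)) (ht : 1 ≤ t) :
    Real.sqrt (∫ y, (deriv (fun z => Θ₀ (t⁻¹ * z) * f z) y) ^ 2) ≤
      Real.sqrt (8 * (M₁ * B₀) ^ 2 + 2 * (M₀ * B₁) ^ 2 * ∫ y, ((1 + |y|) ^ (-1 : ℤ)) ^ 2) := by
  have ht0 : 0 < t := by linarith
  have hθ : ContDiff ℝ ∞ fun y => Θ₀ (t⁻¹ * y) := hΘ.contDiff.comp (contDiff_const.mul contDiff_id)
  set θ := fun y => Θ₀ (t⁻¹ * y)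
  have ha_supp : ∀ y, 2 * t < |y| → deriv θ y * f y = 0 := fun y hy => by
    rw [← iteratedDeriv_one, hΘ.iteratedDeriv_rescale_eq_zero_of_two_mul_lt ht0 1 hy, zero_mul]
  have ha_int : Integrable fun y => (deriv θ y * f y) ^ 2 :=
    integrable_sq_of_continuous_of_support
      ((hθ.continuous_deriv (by exact_mod_cast le_top)).mul hfd.continuous) ha_supp
  have ha_le := hΘ.integral_sq_deriv_rescale_mul_le hM₁ hf ht
  have hb : ∀ y, |θ y * deriv f y| ≤ M₀ * B₁ * (1 + |y|) ^ (-1 : ℤ) := fun y => by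
    rw [abs_mul, mul_assoc]
    exact mul_le_mul (hM₀ _) (hf' y) (abs_nonneg _) ((abs_nonneg _).trans (hM₀ 0))
  have hg_int : Integrable fun y => (M₀ * B₁ * (1 + |y|) ^ (-1 : ℤ)) ^ 2 :=
    (integrable_one_add_abs_zpow_neg_two.const_mul ((M₀ * B₁) ^ 2)).congr
      (.of_forall fun y => by ring)
  have hb_int : Integrable fun y => (θ y * deriv f y) ^ 2 :=
    integrable_sq_of_abs_le (hθ.continuous.aestronglyMeasurable.mul
      (measurable_deriv f).aestronglyMeasurable) hg_int hb
  have hb_le : ∫ y, (θ y * deriv f y) ^ 2 ≤ (M₀ * B₁) ^ 2 * ∫ y, ((1 + |y|) ^ (-1 : ℤ)) ^ 2 := by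
    rw [← integral_const_mul]
    simpa only [mul_pow] using integral_sq_le_of_abs_le hg_int hb
  have hderiv : ∀ y, deriv (fun z => Θ₀ (t⁻¹ * z) * f z) y =
      deriv θ y * f y + θ y * deriv f y :=
    fun y => deriv_fun_mul (hθ.differentiable (by simp) y) (hfd y)
  simp_rw [hderiv]
  refine Real.sqrt_le_sqrt ((integral_sq_add_le ha_int hb_int).trans ?_)
  linarith

end IsCutoff

theorem one_add_sq_rpow_le (x : ℝ) (q : ℕ) : (1 + x ^ 2) ^ ((q : ℝ) / 2) ≤ (1 + |x|) ^ q := by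
  calc (1 + x ^ 2) ^ ((q : ℝ) / 2) ≤ ((1 + |x|) ^ 2) ^ ((q : ℝ) / 2) := by
        gcongr; nlinarith [sq_abs x, abs_nonneg x]
    _ = (1 + |x|) ^ q := by
        rw [← Real.rpow_natCast (1 + |x|) 2, ← Real.rpow_mul (by positivity),
          show ((2 : ℕ) : ℝ) * ((q : ℝ) / 2) = q by push_cast; ring, Real.rpow_natCast]

theorem memY.abs_iteratedDeriv_le {v : ℝ → ℝ} (hv : memY v) (p m : ℕ) :
    ∃ B, ∀ x, |iteratedDeriv p v x| ≤ B * (1 + |x|) ^ (-(m : ℤ)) := by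
  obtain ⟨-, -, q, hq⟩ := hv
  obtain ⟨C, hC0, hC⟩ := hq p
  refine ⟨C * ((q + m).factorial * Real.exp 1), fun x => ?_⟩
  have ha : 0 < 1 + |x| := by positivity
  -- `a ^ n / n! ≤ exp a` with `a = 1 + |x|` trades `m` extra powers of `1 + |x|` for `e^{|x|}`
  have hexp : (1 + |x|) ^ (q + m) * Real.exp (-|x|) ≤ (q + m).factorial * Real.exp 1 := by
    have h := Real.pow_div_factorial_le_exp (1 + |x|) ha.le (q + m)
    rw [div_le_iff₀ (by positivity), Real.exp_add] at h
    calc (1 + |x|) ^ (q + m) * Real.exp (-|x|)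
        ≤ Real.exp 1 * Real.exp |x| * (q + m).factorial * Real.exp (-|x|) := by gcongr
      _ = (q + m).factorial * Real.exp 1 := by
        rw [mul_right_comm, mul_assoc _ _ (Real.exp _), ← Real.exp_add]; simp [mul_comm]
  calc |iteratedDeriv p v x| ≤ C * (1 + x ^ 2) ^ ((q : ℝ) / 2) * Real.exp (-|x|) := hC x
    _ ≤ C * (1 + |x|) ^ q * Real.exp (-|x|) := by gcongr; exact one_add_sq_rpow_le x q
    _ = C * ((1 + |x|) ^ (q + m) * Real.exp (-|x|)) * (1 + |x|) ^ (-(m : ℤ)) := by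
        rw [zpow_neg, zpow_natCast, pow_add]; field_simp
    _ ≤ C * ((q + m).factorial * Real.exp 1) * (1 + |x|) ^ (-(m : ℤ)) := by gcongr

namespace IsCutChi

variable {χ : ℝ → ℝ}

theorem abs_le_one (hχ : IsCutChi χ) (x : ℝ) : |χ x| ≤ 1 :=
  abs_le.2 ⟨by linarith [(hχ.2.2.1 x).1], (hχ.2.2.1 x).2⟩

theorem eventuallyEq_zero (hχ : IsCutChi χ) : χ =ᶠ[𝓝 0] fun _ => 0 := by
  obtain ⟨-, -, -, hzero, -⟩ := hχ
  filter_upwards [Metric.ball_mem_nhds (0 : ℝ) (by norm_num : (0 : ℝ) < 1 / 2)] with x hx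
  exact hzero x (by rw [Metric.mem_ball, dist_zero_right, Real.norm_eq_abs] at hx; linarith)

theorem deriv_eq_zero_of_one_lt_abs (hχ : IsCutChi χ) {x : ℝ} (hx : 1 < |x|) :
    deriv χ x = 0 := by
  obtain ⟨-, -, -, -, hone⟩ := hχ
  have : χ =ᶠ[𝓝 x] fun _ => 1 :=
    eventually_of_mem ((isOpen_lt continuous_const continuous_abs).mem_nhds hx)
      fun y hy => hone y (le_of_lt hy)
  rw [this.deriv_eq, deriv_const]

theorem exists_abs_deriv_le (hχ : IsCutChi χ) : ∃ M, ∀ x, |deriv χ x| ≤ M :=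
  (hχ.1.continuous_deriv (by exact_mod_cast le_top)).bounded_above_of_compact_support
    (.intro (isCompact_Icc (a := -1) (b := 1)) fun x hx =>
      hχ.deriv_eq_zero_of_one_lt_abs (by rw [mem_Icc, ← abs_le] at hx; linarith))

theorem differentiable_abs_pow_mul (hχ : IsCutChi χ) (i : ℕ) :
    Differentiable ℝ fun x => |x| ^ i * χ x := by
  intro x
  rcases eq_or_ne x 0 with rfl | hx
  · refine (differentiableAt_const (0 : ℝ)).congr_of_eventuallyEq ?_
    filter_upwards [hχ.eventuallyEq_zero] with y hy
    simp [hy]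
  · exact ((differentiableAt_abs hx).pow i).mul (hχ.1.differentiable (by simp) x)

theorem abs_deriv_abs_pow_mul_le (hχ : IsCutChi χ) (i : ℕ) (x : ℝ) :
    |deriv (fun x => |x| ^ i * χ x) x| ≤ i * |x| ^ (i - 1) + |x| ^ i * |deriv χ x| := by
  rcases eq_or_ne x 0 with rfl | hx
  · have h0 : (fun x => |x| ^ i * χ x) =ᶠ[𝓝 0] fun _ => 0 := by
      filter_upwards [hχ.eventuallyEq_zero] with y hy
      simp [hy]
    rw [h0.deriv_eq, deriv_const, abs_zero]
    positivity
  have hd : HasDerivAt (fun x => |x| ^ i * χ x)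
      (i * |x| ^ (i - 1) * SignType.sign x * χ x + |x| ^ i * deriv χ x) x :=
    ((hasDerivAt_abs hx).pow i).mul (hχ.1.differentiable (by simp) x).hasDerivAt
  have hsign : |(SignType.sign x : ℝ)| ≤ 1 := by
    rcases lt_or_gt_of_ne hx with h | h <;> simp [h]
  have hχ1 := hχ.abs_le_one x
  rw [hd.deriv]
  refine (abs_add_le _ _).trans (add_le_add ?_ (by rw [abs_mul, abs_pow, abs_abs]))
  rw [abs_mul, abs_mul, abs_mul, abs_pow, abs_abs, Nat.abs_cast]
  calc (i : ℝ) * |x| ^ (i - 1) * |(SignType.sign x : ℝ)| * |χ x| ≤ i * |x| ^ (i - 1) * 1 * 1 := by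
        gcongr
    _ = i * |x| ^ (i - 1) := by ring

theorem exists_abs_deriv_abs_pow_mul_le (hχ : IsCutChi χ) :
    ∃ K, ∀ (i : ℕ) (x : ℝ),
      |deriv (fun x => |x| ^ i * χ x) x| ≤ (i + K) * (1 + |x|) ^ ((i : ℤ) - 1) := by
  obtain ⟨M, hM⟩ := hχ.exists_abs_deriv_le
  have hM0 : 0 ≤ M := (abs_nonneg _).trans (hM 0)
  refine ⟨2 * M, fun i x => (hχ.abs_deriv_abs_pow_mul_le i x).trans ?_⟩
  have hx1 : 1 ≤ 1 + |x| := by linarith [abs_nonneg x]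
  have hpoly : (i : ℝ) * |x| ^ (i - 1) ≤ i * (1 + |x|) ^ ((i : ℤ) - 1) := by
    rcases Nat.eq_zero_or_pos i with rfl | hi
    · simp
    · rw [show (i : ℤ) - 1 = ((i - 1 : ℕ) : ℤ) by omega, zpow_natCast]
      gcongr; linarith
  -- `deriv χ` lives on `|x| ≤ 1`, where `(1 + |x|) ^ (i - 1) ≥ 1 / 2`
  have hbump : |x| ^ i * |deriv χ x| ≤ 2 * M * (1 + |x|) ^ ((i : ℤ) - 1) := by
    rcases lt_or_ge 1 |x| with h | h
    · rw [hχ.deriv_eq_zero_of_one_lt_abs h, abs_zero, mul_zero]; positivity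
    have hhalf : 1 ≤ 2 * (1 + |x|) ^ ((i : ℤ) - 1) := by
      calc (1 : ℝ) ≤ 2 * (1 + |x|) ^ (-1 : ℤ) := by
            rw [zpow_neg_one, ← div_eq_mul_inv, le_div_iff₀ (by positivity)]; linarith
        _ ≤ 2 * (1 + |x|) ^ ((i : ℤ) - 1) := by gcongr; omega
    calc |x| ^ i * |deriv χ x| ≤ 1 * M := by
          gcongr; exacts [pow_le_one₀ (abs_nonneg x) h, hM x]
      _ ≤ M * (2 * (1 + |x|) ^ ((i : ℤ) - 1)) := by nlinarith
      _ = 2 * M * (1 + |x|) ^ ((i : ℤ) - 1) := by ring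
  linarith

end IsCutChi

namespace memZ

variable {χ R : ℝ → ℝ} {k : ℕ}

theorem differentiable (hχ : IsCutChi χ) (hR : memZ χ k R) : Differentiable ℝ R := by
  obtain ⟨v, hv, c, hc⟩ := hR
  rw [funext hc]
  exact (hv.1.differentiable (by simp)).add
    (Differentiable.fun_sum fun i _ => (hχ.differentiable_abs_pow_mul i).const_mul (c i))

theorem exists_abs_le (hχ : IsCutChi χ) (hR : memZ χ k R) :
    ∃ B, ∀ x, |R x| ≤ B * (1 + |x|) ^ (k : ℤ) := by
  obtain ⟨v, hv, c, hc⟩ := hR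
  obtain ⟨Bv, hBv⟩ := hv.abs_iteratedDeriv_le 0 0
  refine ⟨Bv + ∑ i ∈ Finset.range (k + 1), |c i|, fun x => ?_⟩
  have hx1 : 1 ≤ 1 + |x| := by linarith [abs_nonneg x]
  have hmu : ∀ i ∈ Finset.range (k + 1), |c i * (|x| ^ i * χ x)| ≤ |c i| * (1 + |x|) ^ (k : ℤ) := by
    intro i hi
    have hχx := hχ.abs_le_one x
    rw [abs_mul, abs_mul, abs_pow, abs_abs, zpow_natCast]
    gcongr
    calc |x| ^ i * |χ x| ≤ (1 + |x|) ^ i * 1 := by gcongr; linarith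
      _ ≤ (1 + |x|) ^ k := by
          rw [mul_one]; exact pow_le_pow_right₀ hx1 (Finset.mem_range_succ_iff.1 hi)
  have hvx : |v x| ≤ Bv * (1 + |x|) ^ (k : ℤ) := by
    have h := hBv x
    rw [iteratedDeriv_zero, Int.natCast_zero, neg_zero, zpow_zero, mul_one] at h
    refine h.trans (le_mul_of_one_le_right ((abs_nonneg _).trans h) (one_le_zpow₀ hx1 (by omega)))
  rw [hc, add_mul, Finset.sum_mul]
  exact (abs_add_le _ _).trans (add_le_add hvx
    ((Finset.abs_sum_le_sum_abs _ _).trans (Finset.sum_le_sum hmu)))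

theorem exists_abs_deriv_le (hχ : IsCutChi χ) (hR : memZ χ k R) :
    ∃ B, ∀ x, |deriv R x| ≤ B * (1 + |x|) ^ ((k : ℤ) - 1) := by
  obtain ⟨v, hv, c, hc⟩ := hR
  obtain ⟨Bv, hBv⟩ := hv.abs_iteratedDeriv_le 1 1
  obtain ⟨K, hK⟩ := hχ.exists_abs_deriv_abs_pow_mul_le
  refine ⟨Bv + ∑ i ∈ Finset.range (k + 1), |c i| * (k + K), fun x => ?_⟩
  have hx1 : 1 ≤ 1 + |x| := by linarith [abs_nonneg x]
  have hmu : ∀ i ∈ Finset.range (k + 1), |c i * deriv (fun x => |x| ^ i * χ x) x| ≤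
      |c i| * (k + K) * (1 + |x|) ^ ((k : ℤ) - 1) := by
    intro i hi
    have hik := Finset.mem_range_succ_iff.1 hi
    have hK0 : 0 ≤ (i : ℝ) + K := by simpa using (abs_nonneg _).trans (hK i 0)
    rw [abs_mul, mul_assoc]
    gcongr
    calc |deriv (fun x => |x| ^ i * χ x) x| ≤ (i + K) * (1 + |x|) ^ ((i : ℤ) - 1) := hK i x
      _ ≤ (k + K) * (1 + |x|) ^ ((k : ℤ) - 1) := by
          gcongr
          linarith [(Nat.cast_le (α := ℝ)).2 hik]
  have hvx : |deriv v x| ≤ Bv * (1 + |x|) ^ ((k : ℤ) - 1) := by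
    have h := hBv x
    rw [iteratedDeriv_one] at h
    have hBv0 : 0 ≤ Bv := by simpa using (abs_nonneg _).trans (hBv 0)
    exact h.trans (by gcongr; omega)
  have hderiv : deriv R x = deriv v x + ∑ i ∈ Finset.range (k + 1),
      c i * deriv (fun x => |x| ^ i * χ x) x := by
    rw [funext hc, deriv_fun_add (hv.1.differentiable (by simp) x)
      (Differentiable.fun_sum (fun i _ => (hχ.differentiable_abs_pow_mul i).const_mul (c i)) x),
      deriv_fun_sum (fun i _ => ((hχ.differentiable_abs_pow_mul i).const_mul (c i)) x)]
    congr 1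
    exact Finset.sum_congr rfl fun i _ => deriv_const_mul _ (hχ.differentiable_abs_pow_mul i x)
  rw [hderiv, add_mul, Finset.sum_mul]
  exact (abs_add_le _ _).trans (add_le_add hvx
    ((Finset.abs_sum_le_sum_abs _ _).trans (Finset.sum_le_sum hmu)))

end memZ

theorem sqrt_add_le_of_sqrt_le_rpow {t X Y Ca Cb Cc : ℝ} {j k : ℕ} (ht : 1 ≤ t) (hX : 0 ≤ X)
    (hY : 0 ≤ Y) (hCb : 0 ≤ Cb) (hCc : 0 ≤ Cc)
    (ha : Real.sqrt X ≤ Ca * t ^ ((1 : ℝ) / 2 + k - j))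
    (hb : 1 ≤ j + k → Real.sqrt Y ≤ Cb * t ^ (-(1 : ℝ) / 2 + k - j))
    (hc : j + k = 0 → Real.sqrt Y ≤ Cc) :
    Real.sqrt (X + Y) ≤ (Ca + Cb + Cc) * t ^ ((1 : ℝ) / 2 + k - j) := by
  have hY' : Real.sqrt Y ≤ (Cb + Cc) * t ^ ((1 : ℝ) / 2 + k - j) := by
    rcases Nat.eq_zero_or_pos (j + k) with hjk | hjk
    · obtain ⟨rfl, rfl⟩ : j = 0 ∧ k = 0 := by omega
      have : 1 ≤ t ^ ((1 : ℝ) / 2 + (0 : ℕ) - (0 : ℕ)) := Real.one_le_rpow ht (by norm_num)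
      nlinarith [hc rfl]
    · calc Real.sqrt Y ≤ Cb * t ^ (-(1 : ℝ) / 2 + k - j) := hb hjk
        _ ≤ (Cb + Cc) * t ^ ((1 : ℝ) / 2 + k - j) := by
          gcongr
          · linarith
          · norm_num
  calc Real.sqrt (X + Y) ≤ Real.sqrt X + Real.sqrt Y := sqrt_add_le_add_sqrt hX hY
    _ ≤ (Ca + Cb + Cc) * t ^ ((1 : ℝ) / 2 + k - j) := by linarith

theorem IsCutoff.exists_rescaled_estimates {Θ₀ : ℝ → ℝ} (hΘ : IsCutoff Θ₀) {χ : ℝ → ℝ}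
    (hχ : IsCutChi χ) (j : ℕ) {k : ℕ} {R : ℝ → ℝ} (hR : memZ χ k R) :
    ∃ C, 0 < C ∧ ∀ t : ℝ, 1 ≤ t →
      Real.sqrt (∫ y, (iteratedDeriv j (fun y => Θ₀ (t⁻¹ * y)) y * R y) ^ 2) ≤
          C * t ^ ((1 : ℝ) / 2 + k - j) ∧
      (1 ≤ j + k → Real.sqrt (∫ y,
          (deriv (fun z => iteratedDeriv j (fun y => Θ₀ (t⁻¹ * y)) z * R z) y) ^ 2) ≤
          C * t ^ (-(1 : ℝ) / 2 + k - j)) ∧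
      (k = 0 → Real.sqrt (∫ y, (deriv (fun z => Θ₀ (t⁻¹ * z) * R z) y) ^ 2) ≤ C) ∧
      Real.sqrt ((∫ y, (iteratedDeriv j (fun y => Θ₀ (t⁻¹ * y)) y * R y) ^ 2) +
          ∫ y, (deriv (fun z => iteratedDeriv j (fun y => Θ₀ (t⁻¹ * y)) z * R z) y) ^ 2) ≤
        C * t ^ ((1 : ℝ) / 2 + k - j) := by
  choose M hM0 hM using hΘ.exists_abs_iteratedDeriv_le
  obtain ⟨B₀, hB₀⟩ := hR.exists_abs_le hχ
  obtain ⟨B₁, hB₁⟩ := hR.exists_abs_deriv_le hχ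
  have hB₀0 : 0 ≤ B₀ := by simpa using (abs_nonneg _).trans (hB₀ 0)
  have hB₁0 : 0 ≤ B₁ := by simpa using (abs_nonneg _).trans (hB₁ 0)
  set Ca := 2 * (3 ^ k * M j * B₀)
  set Cb := 2 * (3 ^ k * M (j + 1) * B₀ + 3 ^ ((k : ℤ) - 1).toNat * M j * B₁)
  set Cc := Real.sqrt (8 * (M 1 * B₀) ^ 2 + 2 * (M 0 * B₁) ^ 2 *
    ∫ y, ((1 + |y|) ^ (-1 : ℤ)) ^ 2)
  have hCa : 0 ≤ Ca := by have := hM0 j; positivity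
  have hCb : 0 ≤ Cb := by have := hM0 j; have := hM0 (j + 1); positivity
  refine ⟨Ca + Cb + Cc + 1, by positivity, fun t ht => ?_⟩
  have ha : Real.sqrt (∫ y, (iteratedDeriv j (fun y => Θ₀ (t⁻¹ * y)) y * R y) ^ 2) ≤
      Ca * t ^ ((1 : ℝ) / 2 + k - j) := by
    convert hΘ.sqrt_integral_sq_iteratedDeriv_rescale_mul_le (hM j) hB₀ (by omega) ht using 3
    · simp
    · push_cast; ring
  have hb : 1 ≤ j + k → Real.sqrt (∫ y,
      (deriv (fun z => iteratedDeriv j (fun y => Θ₀ (t⁻¹ * y)) z * R z) y) ^ 2) ≤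
      Cb * t ^ (-(1 : ℝ) / 2 + k - j) := fun hjk => by
    convert hΘ.sqrt_integral_sq_deriv_iteratedDeriv_rescale_mul_le (hM j) (hM (j + 1))
      (hR.differentiable hχ) hB₀ hB₁ (by omega) ht using 3
    · simp
    · push_cast; ring
  have hc : k = 0 → Real.sqrt (∫ y, (deriv (fun z => Θ₀ (t⁻¹ * z) * R z) y) ^ 2) ≤ Cc := by
    rintro rfl
    exact hΘ.sqrt_integral_sq_deriv_rescale_mul_le (by simpa using hM 0) (by simpa using hM 1)
      (hR.differentiable hχ) (by simpa using hB₀) (by simpa using hB₁) ht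
  have hCc : 0 ≤ Cc := Real.sqrt_nonneg _
  refine ⟨ha.trans (by gcongr; linarith), fun h => (hb h).trans (by gcongr; linarith),
    fun h => (hc h).trans (by linarith), (sqrt_add_le_of_sqrt_le_rpow ht
      (integral_nonneg fun _ => sq_nonneg _) (integral_nonneg fun _ => sq_nonneg _) hCb hCc ha hb
      fun hjk => ?_).trans (by gcongr ?_ * _; linarith)⟩
  obtain ⟨rfl, rfl⟩ : j = 0 ∧ k = 0 := by omega
  simpa using hc rfl

theorem rpow_le_two_pow_mul_rpow {t u e : ℝ} {N : ℕ} (hu : 0 < u) (h₁ : u / 2 ≤ t)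
    (h₂ : t ≤ 2 * u) (he : |e| ≤ N) : t ^ e ≤ 2 ^ N * u ^ e := by
  have htwo : ∀ a : ℝ, a ≤ N → (2 : ℝ) ^ a ≤ 2 ^ N := fun a ha => by
    rw [← Real.rpow_natCast]; exact Real.rpow_le_rpow_of_exponent_le one_le_two ha
  rcases le_or_gt 0 e with he0 | he0
  · calc t ^ e ≤ (2 * u) ^ e := by gcongr; linarith
      _ = 2 ^ e * u ^ e := Real.mul_rpow zero_le_two hu.le
      _ ≤ 2 ^ N * u ^ e := by gcongr; exact htwo e (le_abs_self e |>.trans he)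
  · calc t ^ e ≤ (u / 2) ^ e := Real.rpow_le_rpow_of_nonpos (by positivity) h₁ he0.le
      _ = 2 ^ (-e) * u ^ e := by
          rw [Real.div_rpow hu.le zero_le_two, Real.rpow_neg zero_le_two]; ring
      _ ≤ 2 ^ N * u ^ e := by gcongr; exact htwo (-e) (neg_le_abs e |>.trans he)

theorem le_two_pow_mul_rpow_mul_rpow {X C t δ s e : ℝ} {N : ℕ} (hC : 0 ≤ C) (hδ : 0 < δ)
    (hs : 0 < s) (h₁ : δ * s / 2 ≤ t) (h₂ : t ≤ 2 * (δ * s)) (he : |e| ≤ N)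
    (hX : X ≤ C * t ^ e) : X ≤ 2 ^ N * C * δ ^ e * s ^ e :=
  calc X ≤ C * (2 ^ N * (δ * s) ^ e) :=
        hX.trans (by gcongr; exact rpow_le_two_pow_mul_rpow (mul_pos hδ hs) h₁ h₂ he)
    _ = 2 ^ N * C * δ ^ e * s ^ e := by rw [Real.mul_rpow hδ.le hs.le]; ring

theorem cutoff_width_bounds {δ lam s : ℝ} (hδ : 0 < δ) (hlam : 0 < lam) (hs : 0 < s)
    (h₁ : 1 / (2 * s) ≤ lam) (h₂ : lam ≤ min δ (2 / s)) :
    1 ≤ δ / lam ∧ δ * s / 2 ≤ δ / lam ∧ δ / lam ≤ 2 * (δ * s) := by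
  refine ⟨(one_le_div hlam).2 (h₂.trans (min_le_left _ _)), ?_, ?_⟩
  · rw [le_div_iff₀ hlam]
    have := mul_le_mul_of_nonneg_left (h₂.trans (min_le_right _ _)) (by positivity : 0 ≤ δ * s / 2)
    rwa [show δ * s / 2 * (2 / s) = δ by field_simp] at this
  · rw [div_le_iff₀ hlam]
    have := mul_le_mul_of_nonneg_left h₁ (by positivity : 0 ≤ 2 * (δ * s))
    rwa [show 2 * (δ * s) * (1 / (2 * s)) = δ by field_simp] at this

theorem cutoff_estimates_Z_general (Θ₀ : ℝ → ℝ) (hsm : ContDiff ℝ ∞ Θ₀)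
    (hone : ∀ x : ℝ, |x| ≤ 1 → Θ₀ x = 1) (hzero : ∀ x : ℝ, 2 ≤ |x| → Θ₀ x = 0)
    (χ : ℝ → ℝ) (hχ : IsCutChi χ) (j k : ℕ) (R : ℝ → ℝ) (hR : memZ χ k R) :
    ∃ C : ℝ, 0 < C ∧ ∀ δ lam s : ℝ, δ ∈ Set.Ioo (0 : ℝ) 1 → 0 < lam → 1 ≤ s →
      1 / (2 * s) ≤ lam → lam ≤ min δ (2 / s) →
      (Real.sqrt (∫ y : ℝ, (iteratedDeriv j (cutTheta Θ₀ δ lam) y * R y) ^ 2)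
          ≤ C * δ ^ ((1 : ℝ) / 2 + (k : ℝ) - (j : ℝ)) * s ^ ((1 : ℝ) / 2 + (k : ℝ) - (j : ℝ))) ∧
      (1 ≤ j + k →
        Real.sqrt (∫ y : ℝ,
            (deriv (fun z : ℝ => iteratedDeriv j (cutTheta Θ₀ δ lam) z * R z) y) ^ 2)
          ≤ C * δ ^ (-(1 : ℝ) / 2 + (k : ℝ) - (j : ℝ)) *
              s ^ (-(1 : ℝ) / 2 + (k : ℝ) - (j : ℝ))) ∧
      (k = 0 →
        Real.sqrt (∫ y : ℝ, (deriv (fun z : ℝ => cutTheta Θ₀ δ lam z * R z) y) ^ 2) ≤ C) ∧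
      Real.sqrt ((∫ y : ℝ, (iteratedDeriv j (cutTheta Θ₀ δ lam) y * R y) ^ 2) +
          ∫ y : ℝ, (deriv (fun z : ℝ => iteratedDeriv j (cutTheta Θ₀ δ lam) z * R z) y) ^ 2)
        ≤ C * δ ^ ((1 : ℝ) / 2 + (k : ℝ) - (j : ℝ)) * s ^ ((1 : ℝ) / 2 + (k : ℝ) - (j : ℝ)) := by
  obtain ⟨C, hC0, hC⟩ := IsCutoff.exists_rescaled_estimates ⟨hsm, hone, hzero⟩ hχ j hR
  refine ⟨2 ^ (j + k + 1) * C, by positivity, fun δ lam s hδ hlam hs h₁ h₂ => ?_⟩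
  have hs0 : 0 < s := by linarith
  obtain ⟨ht, htu₁, htu₂⟩ := cutoff_width_bounds hδ.1 hlam hs0 h₁ h₂
  have hexp : ∀ a : ℝ, |a| ≤ 1 → |a + k - j| ≤ ((j + k + 1 : ℕ) : ℝ) := fun a ha => by
    rw [abs_le] at ha ⊢; push_cast; constructor <;> linarith [(Nat.cast_nonneg j : (0 : ℝ) ≤ j),
      (Nat.cast_nonneg k : (0 : ℝ) ≤ k)]
  have transfer {X a : ℝ} (ha : |a| ≤ 1) (hX : X ≤ C * (δ / lam) ^ (a + k - j)) :=
    le_two_pow_mul_rpow_mul_rpow hC0.le hδ.1 hs0 htu₁ htu₂ (hexp a ha) hX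
  have hcut : cutTheta Θ₀ δ lam = fun y => Θ₀ ((δ / lam)⁻¹ * y) := by
    funext y; rw [cutTheta, inv_div, div_mul_eq_mul_div]
  obtain ⟨ha, hb, hc, hH⟩ := hC (δ / lam) ht
  simp only [hcut]
  refine ⟨transfer (by norm_num [abs_div]) ha, fun h => transfer (by norm_num [abs_div]) (hb h),
    fun h => (hc h).trans (le_mul_of_one_le_left hC0.le (one_le_pow₀ one_le_two)),
    transfer (by norm_num [abs_div]) hH⟩

/-- Cut-off estimates against `𝒵ₖ`: for `R ∈ 𝒵ₖ` and `j, k ≥ 0` there is `C` (independent of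
`δ, λ, s`) such that, whenever `1/(2s) ≤ λ ≤ min(δ, 2/s)`:
(a) `‖θ^{(j)}R‖_{L²} ≤ C δ^{1/2+k−j} s^{1/2+k−j}`;
(b) if `j+k ≥ 1` then `‖(θ^{(j)}R)'‖_{L²} ≤ C δ^{−1/2+k−j} s^{−1/2+k−j}`;
(c) if `k = 0` then `‖(θR)'‖_{L²} ≤ C`;
and in particular `‖θ^{(j)}R‖_{H¹} ≤ C δ^{1/2+k−j} s^{1/2+k−j}`. -/
theorem cutoff_estimates_Z (Θ₀ : ℝ → ℝ) (hsm : ContDiff ℝ ∞ Θ₀)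
    (heven : ∀ x, Θ₀ (-x) = Θ₀ x) (hrange : ∀ x, Θ₀ x ∈ Set.Icc (0 : ℝ) 1)
    (hone : ∀ x : ℝ, |x| ≤ 1 → Θ₀ x = 1) (hzero : ∀ x : ℝ, 2 ≤ |x| → Θ₀ x = 0)
    (χ : ℝ → ℝ) (hχ : IsCutChi χ) (j k : ℕ) (R : ℝ → ℝ) (hR : memZ χ k R) :
    ∃ C : ℝ, 0 < C ∧ ∀ δ lam s : ℝ, δ ∈ Set.Ioo (0 : ℝ) 1 → 0 < lam → 1 ≤ s →
      1 / (2 * s) ≤ lam → lam ≤ min δ (2 / s) →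
      (Real.sqrt (∫ y : ℝ, (iteratedDeriv j (cutTheta Θ₀ δ lam) y * R y) ^ 2)
          ≤ C * δ ^ ((1 : ℝ) / 2 + (k : ℝ) - (j : ℝ)) * s ^ ((1 : ℝ) / 2 + (k : ℝ) - (j : ℝ))) ∧
      (1 ≤ j + k →
        Real.sqrt (∫ y : ℝ,
            (deriv (fun z : ℝ => iteratedDeriv j (cutTheta Θ₀ δ lam) z * R z) y) ^ 2)
          ≤ C * δ ^ (-(1 : ℝ) / 2 + (k : ℝ) - (j : ℝ)) *
              s ^ (-(1 : ℝ) / 2 + (k : ℝ) - (j : ℝ))) ∧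
      (k = 0 →
        Real.sqrt (∫ y : ℝ, (deriv (fun z : ℝ => cutTheta Θ₀ δ lam z * R z) y) ^ 2) ≤ C) ∧
      Real.sqrt ((∫ y : ℝ, (iteratedDeriv j (cutTheta Θ₀ δ lam) y * R y) ^ 2) +
          ∫ y : ℝ, (deriv (fun z : ℝ => iteratedDeriv j (cutTheta Θ₀ δ lam) z * R z) y) ^ 2)
        ≤ C * δ ^ ((1 : ℝ) / 2 + (k : ℝ) - (j : ℝ)) * s ^ ((1 : ℝ) / 2 + (k : ℝ) - (j : ℝ)) :=
  cutoff_estimates_Z_general Θ₀ hsm hone hzero χ hχ j k R hR
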